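/- Let R' be the smallest consecutive sublist of rows (a prefix-minimal window obtained by scanning rows in order) such that each predicted field appears at least twice in R'. If there exists a field p that is correctly predicted (p ∈ F ∩ F') and p appears exactly once in every record, then R' contains at least one complete record. -/

import Mathlib

/-
The correctly predicted field `p` occurs exactly once in the first record, so any prefix of
the document lying inside the first record contains `p` at most once. The window `R'` must
contain `p` twice, hence it reaches past the end of the first record and contains it.
-/

theorem List.length_lt_of_count_lt_count_take {α : Type*} [DecidableEq α]
    {l₁ l₂ : List α} {n : ℕ} {a : α} (h : l₁.count a < ((l₁ ++ l₂).take n).count a) :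
    l₁.length < n := by
  by_contra! hn
  rw [List.take_append_of_le_length hn] at h
  exact (List.take_sublist n l₁).count_le a |>.not_gt h

theorem stmt_12_general {α : Type*} [DecidableEq α] (D : List α) (recs : List (List α))
    (hjoin : D = recs.flatten) (hrecs : 2 ≤ recs.length)
    (F : Finset α)
    (p : α) (hpF : p ∈ F)
    (honce : ∀ r ∈ recs, r.count p = 1)
    (t : ℕ)
    (ht : ∀ f ∈ F, 2 ≤ (D.take t).count f) :
    ∃ (pre : List (List α)) (rec : List α) (post : List (List α)),
      recs = pre ++ rec :: post ∧ pre.flatten.length + rec.length ≤ t := by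
  obtain ⟨first, rest, rfl⟩ : ∃ first rest, recs = first :: rest :=
    List.exists_cons_of_length_pos (by omega)
  refine ⟨[], first, rest, rfl, ?_⟩
  have hfirst : first.count p = 1 := honce first List.mem_cons_self
  have hwindow : 2 ≤ ((first ++ rest.flatten).take t).count p := by
    simpa [hjoin] using ht p hpF
  simpa using
    (List.length_lt_of_count_lt_count_take (l₂ := rest.flatten) (by omega : first.count p < _)).le

/-- the document `D` is the concatenation of at least two nonempty records
`recs`, each generated from the same true template with true field set `F'`; `F` is the
predicted field set and every field of `F` occurs at least twice in `D`.  `R' = D.take t`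
is the minimal prefix window in which every predicted field occurs at least twice.  If some
field `p ∈ F ∩ F'` occurs exactly once in every record, then `R'` contains at least one
complete record. -/
theorem stmt_12 {α : Type*} [DecidableEq α] (D : List α) (recs : List (List α))
    (hjoin : D = recs.flatten) (hne : ∀ r ∈ recs, r ≠ []) (hrecs : 2 ≤ recs.length)
    (F F' : Finset α) (hF : ∀ f ∈ F, 2 ≤ D.count f)
    (p : α) (hpF : p ∈ F) (hpF' : p ∈ F')
    (honce : ∀ r ∈ recs, r.count p = 1)
    (t : ℕ)
    (ht : ∀ f ∈ F, 2 ≤ (D.take t).count f)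
    (htmin : ∀ t' < t, ¬ (∀ f ∈ F, 2 ≤ (D.take t').count f)) :
    ∃ (pre : List (List α)) (rec : List α) (post : List (List α)),
      recs = pre ++ rec :: post ∧ pre.flatten.length + rec.length ≤ t :=
  stmt_12_general D recs hjoin hrecs F p hpF honce t ht
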